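/- arXiv:1909.00470 — 5 statements merged into one kernel-verified Lean document; each statement's English description precedes it below -/
import Mathlib

section
/- Consider the ADMM x-z-u iteration for minimizing f(x) + g(z) subject to Ax − Bz = c, where f(x) = (1/2)(x−x̃)^T G(x−x̃) with G symmetric positive definite, B invertible, and g differentiable. If z^{k+2} = z^{k+1} (z has reached a fixed point of one iteration), then A x^{k+2} − B z^{k+1} − c = 0. -/
/-! Rewriting the `z`-update's optimality condition with the `u`-update gives
`∇g(z^{k+1}) = μ Bᵀ u^{k+1}`. Since `μ Bᵀ` is injective, a repeated `z` forces a repeated `u`,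
and the primal residual `A x^{k+2} − B z^{k+2} − c = u^{k+2} − u^{k+1}` vanishes. -/

open Matrix

noncomputable def mv {m n : ℕ} (M : Matrix (Fin m) (Fin n) ℝ)
    (v : EuclideanSpace ℝ (Fin n)) : EuclideanSpace ℝ (Fin m) :=
  Matrix.toEuclideanLin M v

lemma mv_injective {m : ℕ} {M : Matrix (Fin m) (Fin m) ℝ} (hM : IsUnit M.det) :
    Function.Injective (mv M) := by
  intro v w h
  have hMv : M *ᵥ v.ofLp = M *ᵥ w.ofLp := congrArg WithLp.ofLp h
  exact WithLp.ofLp_injective 2 <|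
    (Matrix.mulVec_injective_iff_isUnit.mpr ((Matrix.isUnit_iff_isUnit_det M).mpr hM)) hMv

lemma smul_mv_injective {m : ℕ} {μ : ℝ} (hμ : μ ≠ 0) {M : Matrix (Fin m) (Fin m) ℝ}
    (hM : IsUnit M.det) : Function.Injective fun v => μ • mv M v :=
  (smul_right_injective _ hμ).comp (mv_injective hM)

lemma admm_gradient_eq_smul_dual {p n : ℕ} (A : Matrix (Fin n) (Fin p) ℝ)
    (B : Matrix (Fin n) (Fin n) ℝ)
    (gg : EuclideanSpace ℝ (Fin n) → EuclideanSpace ℝ (Fin n))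
    (c : EuclideanSpace ℝ (Fin n)) (μ : ℝ)
    (x : ℕ → EuclideanSpace ℝ (Fin p)) (z u : ℕ → EuclideanSpace ℝ (Fin n))
    (hz : ∀ k, gg (z (k+1))
      = μ • mv Bᵀ (mv A (x (k+1)) - mv B (z (k+1)) + u k - c))
    (hu : ∀ k, u (k+1) = u k + mv A (x (k+1)) - mv B (z (k+1)) - c) (k : ℕ) :
    gg (z (k+1)) = μ • mv Bᵀ (u (k+1)) := by
  rw [hz k, hu k]
  abel_nf

theorem admm_xzu_fixed_point_residual_general {p n : ℕ}
    (A : Matrix (Fin n) (Fin p) ℝ) (B : Matrix (Fin n) (Fin n) ℝ) (hB : IsUnit B.det)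
    (gg : EuclideanSpace ℝ (Fin n) → EuclideanSpace ℝ (Fin n))
    (c : EuclideanSpace ℝ (Fin n))
    (μ : ℝ) (hμ : 0 < μ)
    (x : ℕ → EuclideanSpace ℝ (Fin p)) (z u : ℕ → EuclideanSpace ℝ (Fin n))
    (hz : ∀ k, gg (z (k+1))
      = μ • mv Bᵀ (mv A (x (k+1)) - mv B (z (k+1)) + u k - c))
    (hu : ∀ k, u (k+1) = u k + mv A (x (k+1)) - mv B (z (k+1)) - c)
    (k : ℕ) (hfix : z (k+2) = z (k+1)) :
    mv A (x (k+2)) - mv B (z (k+1)) - c = 0 := by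
  have hgrad := admm_gradient_eq_smul_dual A B gg c μ x z u hz hu
  have hdual : u (k+2) = u (k+1) := by
    apply smul_mv_injective hμ.ne' (by rwa [det_transpose] : IsUnit Bᵀ.det)
    simp only [← hgrad, hfix]
  have hres : mv A (x (k+2)) - mv B (z (k+1)) - c = u (k+2) - u (k+1) := by
    rw [hu (k+1), hfix]
    abel
  rw [hres, hdual, sub_self]

/-- For the ADMM x-z-u iteration with quadratic `f`, `B` invertible and `g`
differentiable, if `z^{k+2} = z^{k+1}` then `A x^{k+2} − B z^{k+1} − c = 0`. -/
theorem admm_xzu_fixed_point_residual {p n : ℕ}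
    (G : Matrix (Fin p) (Fin p) ℝ) (hG : G.PosDef)
    (A : Matrix (Fin n) (Fin p) ℝ) (B : Matrix (Fin n) (Fin n) ℝ) (hB : IsUnit B.det)
    (g : EuclideanSpace ℝ (Fin n) → ℝ)
    (gg : EuclideanSpace ℝ (Fin n) → EuclideanSpace ℝ (Fin n))
    (hg : ∀ z, HasGradientAt g (gg z) z)
    (xt : EuclideanSpace ℝ (Fin p)) (c : EuclideanSpace ℝ (Fin n))
    (μ : ℝ) (hμ : 0 < μ)
    (x : ℕ → EuclideanSpace ℝ (Fin p)) (z u : ℕ → EuclideanSpace ℝ (Fin n))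
    (hx : ∀ k, x (k+1)
      = mv (G + μ • (Aᵀ * A))⁻¹ (mv G xt + μ • mv Aᵀ (mv B (z k) + c - u k)))
    (hz : ∀ k, gg (z (k+1))
      = μ • mv Bᵀ (mv A (x (k+1)) - mv B (z (k+1)) + u k - c))
    (hu : ∀ k, u (k+1) = u k + mv A (x (k+1)) - mv B (z (k+1)) - c)
    (k : ℕ) (hfix : z (k+2) = z (k+1)) :
    mv A (x (k+2)) - mv B (z (k+1)) - c = 0 :=
  admm_xzu_fixed_point_residual_general A B hB gg c μ hμ x z u hz hu k hfix
end

section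
/- Let ĝ: R^n → R be differentiable with ∇ĝ Lipschitz with constant L₁ on a convex set S, let μ > L₁, and let q ∈ R^n. If w₂ ∈ S is a minimizer over S of the function w ↦ ĝ(w) + (μ/2)‖w − q‖², then for every w₁ ∈ S: ĝ(w₂) + (μ/2)‖w₂ − q‖² ≤ ĝ(w₁) + (μ/2)‖w₁ − q‖² − ((μ − L₁)/2)‖w₁ − w₂‖². -/
open scoped RealInnerProductSpace

/-- Sufficient decrease at a minimizer of the proximal objective
`w ↦ ĝ(w) + (μ/2)‖w − q‖²` when `∇ĝ` is `L₁`-Lipschitz on a convex set `S` and `μ > L₁`. -/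
theorem prox_sufficient_decrease {n : ℕ}
    (S : Set (EuclideanSpace ℝ (Fin n))) (hS : Convex ℝ S)
    (gh : EuclideanSpace ℝ (Fin n) → ℝ)
    (gg : EuclideanSpace ℝ (Fin n) → EuclideanSpace ℝ (Fin n))
    (L1 μ : ℝ) (hμ : L1 < μ)
    (hdiff : ∀ w ∈ S, HasGradientAt gh (gg w) w)
    (hlip : ∀ w₁ ∈ S, ∀ w₂ ∈ S, ‖gg w₁ - gg w₂‖ ≤ L1 * ‖w₁ - w₂‖)
    (q : EuclideanSpace ℝ (Fin n))
    (w₂ : EuclideanSpace ℝ (Fin n)) (hw₂ : w₂ ∈ S)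
    (hmin : IsMinOn (fun w => gh w + μ/2 * ‖w - q‖^2) S w₂)
    (hfoc : gg w₂ + μ • (w₂ - q) = 0) :
    ∀ w₁ ∈ S, gh w₂ + μ/2 * ‖w₂ - q‖^2
      ≤ gh w₁ + μ/2 * ‖w₁ - q‖^2 - (μ - L1)/2 * ‖w₁ - w₂‖^2 := by
  intro w₁ hw₁
  set d : EuclideanSpace ℝ (Fin n) := w₁ - w₂ with hd
  set c : ℝ := ⟪gg w₂, d⟫ with hc
  set γ : ℝ → EuclideanSpace ℝ (Fin n) := fun t => w₂ + t • d with hγ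
  have hmem : ∀ t ∈ Set.Icc (0:ℝ) 1, γ t ∈ S := fun t ht =>
    hS.add_smul_sub_mem hw₂ hw₁ ht
  set ψ : ℝ → ℝ := fun t => gh (γ t) - t * c + L1 * ‖d‖^2 * t^2 / 2 with hψdef
  have hγd : ∀ t : ℝ, HasDerivAt γ d t := by
    intro t
    have h1 : HasDerivAt (fun t : ℝ => t • d) ((1:ℝ) • d) t :=
      (hasDerivAt_id t).smul_const d
    have h2 := h1.const_add w₂
    rw [one_smul] at h2
    exact h2
  have hψd : ∀ t ∈ Set.Icc (0:ℝ) 1,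
      HasDerivAt ψ (⟪gg (γ t), d⟫ - c + L1 * ‖d‖^2 * t) t := by
    intro t ht
    have h1 : HasDerivAt (fun t => gh (γ t)) (⟪gg (γ t), d⟫) t := by
      have hf := (hdiff (γ t) (hmem t ht)).hasFDerivAt
      have := hf.comp_hasDerivAt t (hγd t)
      simp only [InnerProductSpace.toDual_apply_apply] at this
      exact this
    have h2 : HasDerivAt (fun t : ℝ => t * c) c t := by
      simpa using (hasDerivAt_id t).mul_const c
    have h3 : HasDerivAt (fun t : ℝ => L1 * ‖d‖^2 * t^2 / 2)
        (L1 * ‖d‖^2 * t) t := by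
      have := ((hasDerivAt_pow 2 t).const_mul (L1 * ‖d‖^2)).div_const 2
      convert this using 1
      · rfl
      · rfl
      · ring
    exact (h1.sub h2).add h3
  have hmono : MonotoneOn ψ (Set.Icc (0:ℝ) 1) := by
    apply monotoneOn_of_deriv_nonneg (convex_Icc 0 1)
    · exact fun t ht => ((hψd t ht).continuousAt).continuousWithinAt
    · intro t ht
      rw [interior_Icc] at ht
      exact ((hψd t (Set.mem_Icc_of_Ioo ht)).differentiableAt).differentiableWithinAt
    · intro t ht
      rw [interior_Icc] at ht
      rw [(hψd t (Set.mem_Icc_of_Ioo ht)).deriv]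
      have hts : γ t ∈ S := hmem t (Set.mem_Icc_of_Ioo ht)
      have hlipt : ‖gg (γ t) - gg w₂‖ ≤ L1 * (t * ‖d‖) := by
        have := hlip (γ t) hts w₂ hw₂
        have hnorm : ‖γ t - w₂‖ = t * ‖d‖ := by
          simp [hγ, norm_smul, abs_of_nonneg ht.1.le]
        rw [hnorm] at this
        exact this
      have hinner : -(L1 * (t * ‖d‖) * ‖d‖) ≤ ⟪gg (γ t) - gg w₂, d⟫ := by
        have h1 : -(‖gg (γ t) - gg w₂‖ * ‖d‖) ≤ ⟪gg (γ t) - gg w₂, d⟫ :=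
          neg_le_of_abs_le (abs_real_inner_le_norm _ _)
        nlinarith [norm_nonneg d]
      rw [inner_sub_left] at hinner
      have : ⟪gg (γ t), d⟫ - c ≥ -(L1 * ‖d‖^2 * t) := by
        simp only [hc]
        nlinarith
      linarith
  have hkey : ψ 0 ≤ ψ 1 :=
    hmono (Set.mem_Icc.2 ⟨le_rfl, zero_le_one⟩) (Set.mem_Icc.2 ⟨zero_le_one, le_rfl⟩)
      zero_le_one
  have hγ0 : γ 0 = w₂ := by simp [hγ]
  have hγ1 : γ 1 = w₁ := by simp [hγ, hd]
  have hdesc : gh w₂ ≤ gh w₁ - c + L1 * ‖d‖^2 / 2 := by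
    have := hkey
    simp only [hψdef, hγ0, hγ1] at this
    linarith [this]
  -- quadratic identity
  have hquad : ‖w₁ - q‖^2 = ‖w₂ - q‖^2 + 2 * ⟪w₂ - q, d⟫ + ‖d‖^2 := by
    have : w₁ - q = (w₂ - q) + d := by
      rw [hd]; abel
    rw [this, @norm_add_sq_real]
  -- first-order condition
  have hfoc' : gg w₂ = -(μ • (w₂ - q)) := eq_neg_of_add_eq_zero_left hfoc
  have hcval : c = -(μ * ⟪w₂ - q, d⟫) := by
    rw [hc, hfoc', inner_neg_left, real_inner_smul_left]
  have hq2 : μ/2 * ‖w₁ - q‖^2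
      = μ/2 * ‖w₂ - q‖^2 + μ * ⟪w₂ - q, d⟫ + μ/2 * ‖d‖^2 := by
    rw [hquad]; ring
  have hdesc' : gh w₂ ≤ gh w₁ + μ * ⟪w₂ - q, d⟫ + L1 * ‖d‖^2 / 2 := by
    rw [hcval] at hdesc; linarith
  linarith
end

section
/- Suppose ∇ĝ is Lipschitz with constant L on R^n where ĝ(w) = g(B^{-1}w), μ > L, K = AG^{-1}A^T is symmetric positive semidefinite, and the ADMM x-z-u iterates satisfy the recursion (I + μK)N(Bz^{k+1}) = Ax̃ + μK Bz^k + (1/μ)B^{-T}∇g(z^k) with N(w) = w + (1/μ)∇ĝ(w). Then ‖Bz^{k+1} − Bz^k‖ ≤ γ ‖Bz^k − Bz^{k−1}‖, where γ = (μρ(K)/(1+μρ(K)) + L/μ) / (1 − L/μ). -/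
open Matrix

open scoped RealInnerProductSpace



lemma key_bound {n : ℕ} (K : Matrix (Fin n) (Fin n) ℝ) (hKpsd : K.PosSemidef)
    (μ : ℝ) (hμ : 0 < μ) (ρ : ℝ) (hρ : ρ = sSup (spectrum ℝ K))
    (d e g : EuclideanSpace ℝ (Fin n))
    (heq : d + μ • mv K d = μ • mv K e + g) :
    ‖d‖ ≤ μ * ρ / (1 + μ * ρ) * ‖e‖ + ‖g‖ := by
  rcases Nat.eq_zero_or_pos n with hn | hn
  · subst hn
    have hd : d = 0 := Subsingleton.elim _ _
    have he : e = 0 := Subsingleton.elim _ _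
    have hg : g = 0 := Subsingleton.elim _ _
    simp [hd, he, hg]
  · have hH : K.IsHermitian := hKpsd.isHermitian
    set b := hH.eigenvectorBasis with hb
    set lam := hH.eigenvalues with hlam
    have hlam_nonneg : ∀ i, 0 ≤ lam i := fun i => hKpsd.eigenvalues_nonneg i
    have hspec : spectrum ℝ K = Set.range lam := hH.spectrum_real_eq_range_eigenvalues
    have hlam_le : ∀ i, lam i ≤ ρ := by
      intro i
      rw [hρ, hspec]
      exact le_csSup (Set.Finite.bddAbove (Set.finite_range _)) ⟨i, rfl⟩
    have hρ0 : 0 ≤ ρ := le_trans (hlam_nonneg ⟨0, hn⟩) (hlam_le ⟨0, hn⟩)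
    set c := μ * ρ / (1 + μ * ρ) with hc
    have h1ρ : 0 < 1 + μ * ρ := by nlinarith
    have hc0 : 0 ≤ c := div_nonneg (by nlinarith) h1ρ.le
    -- coordinates
    have hsym : (Matrix.toEuclideanLin K).IsSymmetric :=
      Matrix.isHermitian_iff_isSymmetric.mp hH
    have hKb : ∀ i, mv K (b i) = lam i • b i := by
      intro i
      ext j
      exact congrFun (hH.mulVec_eigenvectorBasis i) j
    have hcoord : ∀ (v : EuclideanSpace ℝ (Fin n)) (i : Fin n),
        b.repr (mv K v) i = lam i * b.repr v i := by
      intro v i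
      rw [OrthonormalBasis.repr_apply_apply, OrthonormalBasis.repr_apply_apply]
      calc ⟪b i, mv K v⟫ = ⟪mv K (b i), v⟫ := (hsym (b i) v).symm
        _ = ⟪lam i • b i, v⟫ := by rw [hKb]
        _ = lam i * ⟪b i, v⟫ := real_inner_smul_left _ _ _
    set D := b.repr d with hD
    set E := b.repr e with hE
    set Gc := b.repr g with hG
    have hco : ∀ i, D i * (1 + μ * lam i) = μ * lam i * E i + Gc i := by
      intro i
      have h := congrArg (fun x => b.repr x i) heq
      simp only [map_add, _root_.map_smul, PiLp.add_apply, PiLp.smul_apply, smul_eq_mul,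
        hcoord] at h
      have h2 : D i + μ * (lam i * D i) = μ * (lam i * E i) + Gc i := h
      linear_combination h2
    have habs : ∀ i, |D i| ≤ c * |E i| + |Gc i| := by
      intro i
      have h1i : 0 < 1 + μ * lam i := by nlinarith [hlam_nonneg i]
      have hcl : μ * lam i ≤ c * (1 + μ * lam i) := by
        rw [hc, div_mul_eq_mul_div, le_div_iff₀ h1ρ]
        nlinarith [hlam_le i, hlam_nonneg i]
      have key : |D i| * (1 + μ * lam i) ≤ (c * |E i| + |Gc i|) * (1 + μ * lam i) := by
        have e1 : |D i| * (1 + μ * lam i) = |μ * lam i * E i + Gc i| := by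
          rw [← abs_of_pos h1i, ← abs_mul, hco i]
        rw [e1]
        have e2 : |μ * lam i * E i + Gc i| ≤ μ * lam i * |E i| + |Gc i| := by
          refine (abs_add_le _ _).trans ?_
          rw [abs_mul, abs_of_nonneg (by nlinarith [hlam_nonneg i] : (0:ℝ) ≤ μ * lam i)]
        have e3 := mul_le_mul_of_nonneg_right hcl (abs_nonneg (E i))
        nlinarith [abs_nonneg (Gc i), mul_nonneg (mul_nonneg hμ.le (hlam_nonneg i)) (abs_nonneg (Gc i))]
      exact le_of_mul_le_mul_right key h1i
    -- norms
    set u : EuclideanSpace ℝ (Fin n) := (WithLp.equiv 2 (Fin n → ℝ)).symm (fun i => |E i|) with hu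
    set v : EuclideanSpace ℝ (Fin n) := (WithLp.equiv 2 (Fin n → ℝ)).symm (fun i => |Gc i|) with hv
    have hunorm : ‖u‖ = ‖E‖ := by
      simp [hu, EuclideanSpace.norm_eq, Real.norm_eq_abs, abs_abs]
    have hvnorm : ‖v‖ = ‖Gc‖ := by
      simp [hv, EuclideanSpace.norm_eq, Real.norm_eq_abs, abs_abs]
    have hDle : ‖D‖ ≤ ‖c • u + v‖ := by
      rw [EuclideanSpace.norm_eq, EuclideanSpace.norm_eq]
      apply Real.sqrt_le_sqrt
      apply Finset.sum_le_sum
      intro i _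
      have h1 : (c • u + v) i = c * |E i| + |Gc i| := rfl
      rw [Real.norm_eq_abs, Real.norm_eq_abs, h1]
      exact pow_le_pow_left₀ (abs_nonneg _) ((habs i).trans (le_abs_self _)) 2
    have hfin : ‖c • u + v‖ ≤ c * ‖E‖ + ‖Gc‖ := by
      calc ‖c • u + v‖ ≤ ‖c • u‖ + ‖v‖ := norm_add_le _ _
        _ = c * ‖E‖ + ‖Gc‖ := by
            rw [norm_smul, Real.norm_eq_abs, abs_of_nonneg hc0, hunorm, hvnorm]
    have hnd : ‖d‖ = ‖D‖ := (b.repr.norm_map d).symm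
    have hne : ‖e‖ = ‖E‖ := (b.repr.norm_map e).symm
    have hng : ‖g‖ = ‖Gc‖ := (b.repr.norm_map g).symm
    rw [hnd, hne, hng]
    exact hDle.trans hfin

/-- If `∇ĝ` (denoted `Gg`, with `∇ĝ(Bz) = B^{-T}∇g(z)`) is `L`-Lipschitz,
`μ > L`, `K = AG⁻¹Aᵀ` and the x-z-u iterates satisfy the recursion
`(I + μK)N(Bz^{k+1}) = Ax̃ + μK Bz^k + (1/μ)∇ĝ(Bz^k)` with `N(w) = w + (1/μ)∇ĝ(w)`,
then `‖Bz^{k+1} − Bz^k‖ ≤ γ‖Bz^k − Bz^{k−1}‖` with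
`γ = (μρ(K)/(1+μρ(K)) + L/μ)/(1 − L/μ)`. -/
theorem admm_xzu_contraction {p n : ℕ}
    (G : Matrix (Fin p) (Fin p) ℝ) (hG : G.PosDef)
    (A : Matrix (Fin n) (Fin p) ℝ) (B : Matrix (Fin n) (Fin n) ℝ) (hB : IsUnit B.det)
    (K : Matrix (Fin n) (Fin n) ℝ) (hK : K = A * G⁻¹ * Aᵀ)
    (Gg : EuclideanSpace ℝ (Fin n) → EuclideanSpace ℝ (Fin n))
    (L μ : ℝ) (hL : 0 < L) (hμ : L < μ)
    (hlip : ∀ w₁ w₂ : EuclideanSpace ℝ (Fin n), ‖Gg w₁ - Gg w₂‖ ≤ L * ‖w₁ - w₂‖)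
    (N : EuclideanSpace ℝ (Fin n) → EuclideanSpace ℝ (Fin n))
    (hN : ∀ w, N w = w + μ⁻¹ • Gg w)
    (xt : EuclideanSpace ℝ (Fin p)) (z : ℕ → EuclideanSpace ℝ (Fin n))
    (hrec : ∀ k, mv (1 + μ • K) (N (mv B (z (k+1))))
      = mv A xt + μ • mv K (mv B (z k)) + μ⁻¹ • Gg (mv B (z k)))
    (ρ : ℝ) (hρ : ρ = sSup (spectrum ℝ K))
    (γ : ℝ) (hγ : γ = (μ * ρ / (1 + μ * ρ) + L / μ) / (1 - L / μ)) (k : ℕ) :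
    ‖mv B (z (k+2)) - mv B (z (k+1))‖ ≤ γ * ‖mv B (z (k+1)) - mv B (z k)‖ := by
  have hμ0 : 0 < μ := hL.trans hμ
  have hKpsd : K.PosSemidef := by
    rw [hK]
    have h1 : (G⁻¹).PosSemidef := hG.inv.posSemidef
    have h2 := h1.mul_mul_conjTranspose_same A
    rwa [Matrix.conjTranspose_eq_transpose_of_trivial] at h2
  -- linearity of mv in the matrix
  have hmv1 : ∀ x : EuclideanSpace ℝ (Fin n), mv (1 + μ • K) x = x + μ • mv K x := by
    intro x
    have h1 : Matrix.toEuclideanLin (1 + μ • K) =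
        Matrix.toEuclideanLin (1 : Matrix (Fin n) (Fin n) ℝ) + μ • Matrix.toEuclideanLin K := by
      rw [map_add, _root_.map_smul]
    have h2 : Matrix.toEuclideanLin (1 : Matrix (Fin n) (Fin n) ℝ) x = x := by
      simp [Matrix.toEuclideanLin_apply, Matrix.one_mulVec]
    show Matrix.toEuclideanLin (1 + μ • K) x = x + μ • mv K x
    rw [h1, LinearMap.add_apply, LinearMap.smul_apply, h2]
    rfl
  set W : ℕ → EuclideanSpace ℝ (Fin n) := fun j => mv B (z j) with hW
  set d : EuclideanSpace ℝ (Fin n) := N (W (k+2)) - N (W (k+1)) with hd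
  set e : EuclideanSpace ℝ (Fin n) := W (k+1) - W k with he
  set g : EuclideanSpace ℝ (Fin n) := μ⁻¹ • (Gg (W (k+1)) - Gg (W k)) with hg
  have hsub : ∀ a b : EuclideanSpace ℝ (Fin n), mv K a - mv K b = mv K (a - b) := by
    intro a b
    exact (map_sub (Matrix.toEuclideanLin K) a b).symm
  have heq : d + μ • mv K d = μ • mv K e + g := by
    have h2 := hrec (k+1)
    have h1 := hrec k
    have h0 : mv (1+μ•K) (N (W (k+2))) - mv (1+μ•K) (N (W (k+1)))
        = μ • mv K (W (k+1)) - μ • mv K (W k) + (μ⁻¹ • Gg (W (k+1)) - μ⁻¹ • Gg (W k)) := by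
      show mv (1+μ•K) (N (mv B (z (k+1+1)))) - mv (1+μ•K) (N (mv B (z (k+1))))
        = μ • mv K (mv B (z (k+1))) - μ • mv K (mv B (z k))
          + (μ⁻¹ • Gg (mv B (z (k+1))) - μ⁻¹ • Gg (mv B (z k)))
      rw [h2, h1]
      abel
    rw [hmv1, hmv1] at h0
    rw [hd, he, hg]
    have c1 : N (W (k+2)) - N (W (k+1)) + μ • mv K (N (W (k+2)) - N (W (k+1)))
        = N (W (k+2)) + μ • mv K (N (W (k+2)))
          - (N (W (k+1)) + μ • mv K (N (W (k+1)))) := by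
      rw [← hsub, smul_sub]; abel
    have c2 : μ • mv K (W (k+1) - W k) + μ⁻¹ • (Gg (W (k+1)) - Gg (W k))
        = μ • mv K (W (k+1)) - μ • mv K (W k)
          + (μ⁻¹ • Gg (W (k+1)) - μ⁻¹ • Gg (W k)) := by
      rw [← hsub, smul_sub, smul_sub]
    rw [c1, c2]
    exact h0
  have hbound := key_bound K hKpsd μ hμ0 ρ hρ d e g heq
  have hgnorm : ‖g‖ ≤ L / μ * ‖e‖ := by
    rw [hg, norm_smul, Real.norm_eq_abs, abs_of_pos (inv_pos.mpr hμ0)]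
    calc μ⁻¹ * ‖Gg (W (k+1)) - Gg (W k)‖ ≤ μ⁻¹ * (L * ‖W (k+1) - W k‖) := by
          exact mul_le_mul_of_nonneg_left (hlip _ _) (inv_pos.mpr hμ0).le
      _ = L / μ * ‖e‖ := by rw [he]; ring
  have hdN : W (k+2) - W (k+1) = d - μ⁻¹ • (Gg (W (k+2)) - Gg (W (k+1))) := by
    rw [hd, hN, hN, smul_sub]
    abel
  have hlow : (1 - L / μ) * ‖W (k+2) - W (k+1)‖ ≤ ‖d‖ := by
    have h1 : ‖W (k+2) - W (k+1)‖ ≤ ‖d‖ + ‖μ⁻¹ • (Gg (W (k+2)) - Gg (W (k+1)))‖ := by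
      rw [hdN]; exact norm_sub_le _ _
    have h2 : ‖μ⁻¹ • (Gg (W (k+2)) - Gg (W (k+1)))‖ ≤ L / μ * ‖W (k+2) - W (k+1)‖ := by
      rw [norm_smul, Real.norm_eq_abs, abs_of_pos (inv_pos.mpr hμ0)]
      calc μ⁻¹ * ‖Gg (W (k+2)) - Gg (W (k+1))‖
          ≤ μ⁻¹ * (L * ‖W (k+2) - W (k+1)‖) :=
            mul_le_mul_of_nonneg_left (hlip _ _) (inv_pos.mpr hμ0).le
        _ = L / μ * ‖W (k+2) - W (k+1)‖ := by ring
    nlinarith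
  have h1Lμ : 0 < 1 - L / μ := by
    have : L / μ < 1 := (div_lt_one hμ0).mpr hμ
    linarith
  show ‖W (k+2) - W (k+1)‖ ≤ γ * ‖W (k+1) - W k‖
  rw [hγ, div_mul_eq_mul_div, le_div_iff₀ h1Lμ]
  nlinarith [hbound, hgnorm, hlow, norm_nonneg e]
end

section
/- Under the ADMM z-x-u iteration (with c = 0, G SPD, B invertible, g differentiable, K = AG^{-1}A^T, and η > 0 such that ‖Kv‖ ≥ η‖v‖ for all v in Range(A)), for all k ≥ 1 the dual variable satisfies ‖u^k‖² ≤ (4/(η²μ²))‖Ax^k − Ax̃‖² + (4ρ(K)²/(μ²η²) + 2/μ²)‖B^{-T}∇g(z^k)‖². -/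
open Matrix

lemma mv_basis {n : ℕ} (K : Matrix (Fin n) (Fin n) ℝ) (hH : K.IsHermitian) (j : Fin n) :
    mv K (hH.eigenvectorBasis j) = hH.eigenvalues j • hH.eigenvectorBasis j := by
  have h1 := hH.mulVec_eigenvectorBasis j
  ext i
  have := congrFun h1 i
  simpa [mv, Matrix.toEuclideanLin_apply] using this

lemma mv_bound_sup' {n : ℕ} [Nonempty (Fin n)] (K : Matrix (Fin n) (Fin n) ℝ)
    (hP : K.PosSemidef) (w : EuclideanSpace ℝ (Fin n)) :
    ‖mv K w‖ ≤ (Finset.univ.sup' Finset.univ_nonempty hP.isHermitian.eigenvalues) * ‖w‖ := by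
  classical
  set hH := hP.isHermitian
  set b := hH.eigenvectorBasis
  set lam := hH.eigenvalues
  set M := Finset.univ.sup' Finset.univ_nonempty lam with hM
  have hlam_nonneg : ∀ i, 0 ≤ lam i := fun i => hP.eigenvalues_nonneg i
  have hlam_le : ∀ i, lam i ≤ M := fun i => Finset.le_sup' lam (Finset.mem_univ i)
  have hM0 : 0 ≤ M := le_trans (hlam_nonneg (Classical.arbitrary _)) (hlam_le _)
  set c : EuclideanSpace ℝ (Fin n) := b.repr w with hc
  have hT : mv K w = ∑ i, (lam i * c i) • b i := by
    conv_lhs => rw [← b.sum_repr w]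
    rw [show mv K = (Matrix.toEuclideanLin K : EuclideanSpace ℝ (Fin n) →ₗ[ℝ] _) from rfl]
    rw [map_sum]
    refine Finset.sum_congr rfl fun i _ => ?_
    rw [_root_.map_smul]
    rw [show (Matrix.toEuclideanLin K : EuclideanSpace ℝ (Fin n) →ₗ[ℝ] _) (b i) = mv K (b i) from rfl,
      mv_basis K hH i, smul_smul, mul_comm]
  have hrepr : b.repr (mv K w) = fun j => lam j * c j := by
    funext j
    rw [hT, map_sum]
    simp only [_root_.map_smul, b.repr_self]
    have hap : (∑ x : Fin n, (lam x * c x) • EuclideanSpace.single x (1:ℝ)) j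
        = ∑ x : Fin n, ((lam x * c x) • EuclideanSpace.single x (1:ℝ)) j :=
      by rw [WithLp.ofLp_sum]; exact Finset.sum_apply j Finset.univ _
    rw [hap]
    simp [EuclideanSpace.single_apply]
  have hnormT : ‖mv K w‖^2 = ∑ j, (lam j * c j)^2 := by
    rw [← b.repr.norm_map (mv K w)]
    rw [EuclideanSpace.norm_eq, hrepr]
    rw [Real.sq_sqrt (by positivity)]
    simp [mul_pow, sq_abs]
  have hnormw : ‖w‖^2 = ∑ j, (c j)^2 := by
    rw [← b.repr.norm_map w, EuclideanSpace.norm_eq, Real.sq_sqrt (by positivity)]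
    simp [sq_abs, hc]
  have hsq : ‖mv K w‖^2 ≤ (M * ‖w‖)^2 := by
    rw [hnormT, mul_pow, hnormw, Finset.mul_sum]
    refine Finset.sum_le_sum fun j _ => ?_
    have h1 : (lam j)^2 ≤ M^2 := by
      have := hlam_le j; have := hlam_nonneg j; nlinarith
    nlinarith [sq_nonneg (c j)]
  have h2 : 0 ≤ M * ‖w‖ := mul_nonneg hM0 (norm_nonneg _)
  nlinarith [norm_nonneg (mv K w)]

lemma mv_bound_spec {n : ℕ} (K : Matrix (Fin n) (Fin n) ℝ) (hP : K.PosSemidef) :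
    0 ≤ sSup (spectrum ℝ K) ∧
      ∀ w : EuclideanSpace ℝ (Fin n), ‖mv K w‖ ≤ sSup (spectrum ℝ K) * ‖w‖ := by
  classical
  rcases Nat.eq_zero_or_pos n with hn | hn
  · subst hn
    haveI : Subsingleton (EuclideanSpace ℝ (Fin 0)) := ⟨fun a b => (WithLp.ext_iff _).mpr (funext fun i => Fin.elim0 i)⟩
    have hs : spectrum ℝ K = ∅ :=
      Set.eq_empty_of_forall_notMem fun μ h => spectrum.mem_iff.mp h (isUnit_of_subsingleton _)
    rw [hs, Real.sSup_empty]
    refine ⟨le_refl _, fun w => ?_⟩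
    have h1 : w = 0 := Subsingleton.elim w 0
    have h2 : mv K w = 0 := by rw [h1]; exact map_zero (Matrix.toEuclideanLin K)
    rw [h1]
    simp [mv]
  · haveI : Nonempty (Fin n) := Fin.pos_iff_nonempty.mp hn
    set hH := hP.isHermitian
    set lam := hH.eigenvalues
    set M := Finset.univ.sup' Finset.univ_nonempty lam with hM
    have hbound := mv_bound_sup' K hP
    have hMspec : M ∈ spectrum ℝ K := by
      obtain ⟨i, _, hi⟩ := Finset.exists_mem_eq_sup' Finset.univ_nonempty lam
      rw [hM, hi]
      exact hH.eigenvalues_mem_spectrum_real i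
    have hbdd : BddAbove (spectrum ℝ K) := by
      refine ⟨M, fun μ hμ => ?_⟩
      have hμ' : μ ∈ spectrum ℝ (Matrix.toEuclideanLin K) := by
        rw [Matrix.spectrum_toEuclideanLin (𝕜 := ℝ) (A := K)]; exact hμ
      have he : Module.End.HasEigenvalue (Matrix.toEuclideanLin K) μ :=
        Module.End.hasEigenvalue_iff_mem_spectrum.mpr hμ'
      obtain ⟨v, hv⟩ := he.exists_hasEigenvector
      have hKv : mv K v = μ • v := hv.apply_eq_smul
      have hvn : 0 < ‖v‖ := norm_pos_iff.mpr hv.right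
      have h4 : ‖mv K v‖ = |μ| * ‖v‖ := by
        rw [hKv, norm_smul, Real.norm_eq_abs]
      have h3 : |μ| * ‖v‖ ≤ M * ‖v‖ := by rw [← h4]; exact hbound v
      exact le_trans (le_abs_self μ) (le_of_mul_le_mul_right h3 hvn)
    have hMle : M ≤ sSup (spectrum ℝ K) := le_csSup hbdd hMspec
    have hM0 : 0 ≤ M := le_trans (hP.eigenvalues_nonneg (Classical.arbitrary _))
      (Finset.le_sup' lam (Finset.mem_univ _))
    refine ⟨le_trans hM0 hMle, fun w => ?_⟩
    exact le_trans (hbound w) (mul_le_mul_of_nonneg_right hMle (norm_nonneg w))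

set_option maxHeartbeats 1000000 in
/-- Under the ADMM z-x-u iteration (c = 0, `G` SPD, `B` invertible, `g`
differentiable, `K = AG⁻¹Aᵀ`, `η > 0` with `‖Kv‖ ≥ η‖v‖` on `Range(A)`), for all `k ≥ 1`:
`‖u^k‖² ≤ (4/(η²μ²))‖Ax^k − Ax̃‖² + (4ρ(K)²/(μ²η²) + 2/μ²)‖B^{-T}∇g(z^k)‖²`. -/
theorem admm_zxu_dual_bound {p n : ℕ}
    (G : Matrix (Fin p) (Fin p) ℝ) (hG : G.PosDef)
    (A : Matrix (Fin n) (Fin p) ℝ) (B : Matrix (Fin n) (Fin n) ℝ) (hB : IsUnit B.det)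
    (K : Matrix (Fin n) (Fin n) ℝ) (hK : K = A * G⁻¹ * Aᵀ)
    (g : EuclideanSpace ℝ (Fin n) → ℝ)
    (gg : EuclideanSpace ℝ (Fin n) → EuclideanSpace ℝ (Fin n))
    (hg : ∀ z, HasGradientAt g (gg z) z)
    (xt : EuclideanSpace ℝ (Fin p)) (μ : ℝ) (hμ : 0 < μ)
    (η : ℝ) (hη : 0 < η)
    (hηK : ∀ v : EuclideanSpace ℝ (Fin n),
      (∃ xv : EuclideanSpace ℝ (Fin p), mv A xv = v) → η * ‖v‖ ≤ ‖mv K v‖)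
    (ρ : ℝ) (hρ : ρ = sSup (spectrum ℝ K))
    (x : ℕ → EuclideanSpace ℝ (Fin p)) (z u : ℕ → EuclideanSpace ℝ (Fin n))
    (hu : ∀ k, u (k+1)
      = mv A (x (k+1)) - mv A (x k) + μ⁻¹ • mv (B⁻¹)ᵀ (gg (z (k+1))))
    (hxid : ∀ k, mv A (x (k+1)) - mv A xt + mv K (mv (B⁻¹)ᵀ (gg (z (k+1))))
      = -(μ • mv K (mv A (x (k+1)) - mv A (x k))))
    (k : ℕ) :
    ‖u (k+1)‖^2
      ≤ 4 / (η^2 * μ^2) * ‖mv A (x (k+1)) - mv A xt‖^2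
        + (4 * ρ^2 / (μ^2 * η^2) + 2 / μ^2) * ‖mv (B⁻¹)ᵀ (gg (z (k+1)))‖^2 := by
  have hPSD : K.PosSemidef := by
    rw [hK]
    have h := (hG.inv.posSemidef).mul_mul_conjTranspose_same A
    rwa [Matrix.conjTranspose_eq_transpose_of_trivial] at h
  obtain ⟨hρ0, hbnd⟩ := mv_bound_spec K hPSD
  rw [← hρ] at hρ0 hbnd
  set d := mv A (x (k+1)) - mv A (x k) with hd
  set e := mv A (x (k+1)) - mv A xt with he
  set w := mv (B⁻¹)ᵀ (gg (z (k+1))) with hw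
  -- d is in range of A
  have hrange : ∃ xv, mv A xv = μ • d := by
    refine ⟨μ • (x (k+1) - x k), ?_⟩
    show Matrix.toEuclideanLin A (μ • (x (k+1) - x k)) = μ • d
    rw [_root_.map_smul, map_sub]
    rfl
  have h1 : η * ‖μ • d‖ ≤ ‖mv K (μ • d)‖ := hηK _ hrange
  have hKsmul : mv K (μ • d) = -(e + mv K w) := by
    have h2 : e + mv K w = -(μ • mv K d) := hxid k
    have : mv K (μ • d) = μ • mv K d := _root_.map_smul (Matrix.toEuclideanLin K) μ d
    rw [this, ← neg_neg (μ • mv K d), ← h2]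
  have h3 : ‖mv K (μ • d)‖ ≤ ‖e‖ + ρ * ‖w‖ := by
    rw [hKsmul, norm_neg]
    exact le_trans (norm_add_le _ _) (by linarith [hbnd w])
  have h4 : ‖μ • d‖ = μ * ‖d‖ := by
    rw [norm_smul, Real.norm_eq_abs, abs_of_pos hμ]
  have h2 : η * (μ * ‖d‖) ≤ ‖e‖ + ρ * ‖w‖ := by rw [← h4]; linarith
  have hule : ‖u (k+1)‖ ≤ ‖d‖ + μ⁻¹ * ‖w‖ := by
    rw [hu k]
    refine le_trans (norm_add_le _ _) ?_
    rw [norm_smul, Real.norm_eq_abs, abs_of_pos (inv_pos.mpr hμ)]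
  have hμU : μ * ‖u (k+1)‖ ≤ μ * ‖d‖ + ‖w‖ := by
    have := mul_le_mul_of_nonneg_left hule (le_of_lt hμ)
    rw [mul_add, ← mul_assoc, mul_inv_cancel₀ (ne_of_gt hμ), one_mul] at this
    linarith
  set D := ‖d‖; set E := ‖e‖; set W := ‖w‖; set U := ‖u (k+1)‖
  have hD : 0 ≤ D := norm_nonneg _
  have hE : 0 ≤ E := norm_nonneg _
  have hW : 0 ≤ W := norm_nonneg _
  have hU : 0 ≤ U := norm_nonneg _
  have key : η^2 * μ^2 * U^2 ≤ 4 * E^2 + 4 * ρ^2 * W^2 + 2 * η^2 * W^2 := by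
    have t0 : 0 ≤ η*(μ*D) := by positivity
    have t1 : (η*(μ*D))^2 ≤ (E+ρ*W)^2 := pow_le_pow_left₀ t0 h2 2
    have s2 : η*(μ*U) ≤ η*(μ*D) + η*W := by
      have := mul_le_mul_of_nonneg_left hμU hη.le
      nlinarith
    have t2 : (η*(μ*U))^2 ≤ 2*(η*(μ*D))^2 + 2*(η*W)^2 := by
      nlinarith [sq_nonneg (η*(μ*D) - η*W),
        mul_nonneg (sub_nonneg.mpr s2) (by positivity : (0:ℝ) ≤ η*(μ*D) + η*W + η*(μ*U))]
    nlinarith [t1, t2, sq_nonneg (E - ρ*W)]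
  have hη2μ2 : 0 < η^2 * μ^2 := by positivity
  have hrhs : 4 / (η^2 * μ^2) * E^2 + (4 * ρ^2 / (μ^2 * η^2) + 2 / μ^2) * W^2
      = (4 * E^2 + 4 * ρ^2 * W^2 + 2 * η^2 * W^2) / (η^2 * μ^2) := by
    field_simp
    ring
  rw [hrhs, le_div_iff₀ hη2μ2]
  nlinarith [key]
end

section
/- Suppose the sequence (x^k, z^k, u^k) is generated by the ADMM x-z-u iteration for min f(x)+g(z) s.t. Ax − Bz = c with f(x) = (1/2)(x−x̃)^TG(x−x̃), G SPD, B invertible, g continuously differentiable, and suppose z^k converges to some z*. Then u^k converges to u* = (1/μ)B^{-T}∇g(z*), x^k converges to x* = (G+μA^TA)^{-1}(Gx̃ + μA^T(Bz* + c − u*)), and the limit (x*, z*, u*) is a stationary point: Ax* − Bz* = c, ∇f(x*) + μA^Tu* = 0, and ∇g(z*) − μB^Tu* = 0. -/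
open Matrix Filter

lemma mv_mv {m n q : ℕ} (M : Matrix (Fin m) (Fin n) ℝ) (N : Matrix (Fin n) (Fin q) ℝ)
    (v : EuclideanSpace ℝ (Fin q)) : mv M (mv N v) = mv (M * N) v := by
  simp [mv, Matrix.toEuclideanLin_apply, Matrix.mulVec_mulVec]

lemma mv_one {n : ℕ} (v : EuclideanSpace ℝ (Fin n)) : mv 1 v = v := by
  simp [mv, Matrix.toEuclideanLin_apply]

lemma mv_add {m n : ℕ} (M : Matrix (Fin m) (Fin n) ℝ) (a b : EuclideanSpace ℝ (Fin n)) :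
    mv M (a + b) = mv M a + mv M b := map_add _ _ _

lemma mv_sub {m n : ℕ} (M : Matrix (Fin m) (Fin n) ℝ) (a b : EuclideanSpace ℝ (Fin n)) :
    mv M (a - b) = mv M a - mv M b := map_sub _ _ _

lemma mv_smul {m n : ℕ} (M : Matrix (Fin m) (Fin n) ℝ) (r : ℝ) (v : EuclideanSpace ℝ (Fin n)) :
    mv M (r • v) = r • mv M v := map_smul _ _ _

lemma mv_addM {m n : ℕ} (M N : Matrix (Fin m) (Fin n) ℝ) (v : EuclideanSpace ℝ (Fin n)) :
    mv (M + N) v = mv M v + mv N v := by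
  rw [mv, map_add, LinearMap.add_apply]; rfl

lemma mv_smulM {m n : ℕ} (r : ℝ) (M : Matrix (Fin m) (Fin n) ℝ) (v : EuclideanSpace ℝ (Fin n)) :
    mv (r • M) v = r • mv M v := by
  rw [mv, _root_.map_smul, LinearMap.smul_apply]; rfl

lemma mv_cont {m n : ℕ} (M : Matrix (Fin m) (Fin n) ℝ) : Continuous (mv M) :=
  LinearMap.continuous_of_finiteDimensional _

/-- If the ADMM x-z-u iterates for `min (1/2)(x−x̃)ᵀG(x−x̃) + g(z)` s.t.
`Ax − Bz = c` (`G` SPD, `B` invertible, `g` continuously differentiable) satisfy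
`z^k → z*`, then `u^k → u* = (1/μ)B^{-T}∇g(z*)`,
`x^k → x* = (G+μAᵀA)⁻¹(Gx̃+μAᵀ(Bz*+c−u*))`, and `(x*,z*,u*)` is a stationary point:
`Ax* − Bz* = c`, `∇f(x*) + μAᵀu* = 0`, `∇g(z*) − μBᵀu* = 0`. -/
theorem admm_xzu_convergence_to_stationary {p n : ℕ}
    (G : Matrix (Fin p) (Fin p) ℝ) (hG : G.PosDef)
    (A : Matrix (Fin n) (Fin p) ℝ) (B : Matrix (Fin n) (Fin n) ℝ) (hB : IsUnit B.det)
    (g : EuclideanSpace ℝ (Fin n) → ℝ)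
    (gg : EuclideanSpace ℝ (Fin n) → EuclideanSpace ℝ (Fin n))
    (hg : ∀ z, HasGradientAt g (gg z) z) (hgc : Continuous gg)
    (xt : EuclideanSpace ℝ (Fin p)) (c : EuclideanSpace ℝ (Fin n))
    (μ : ℝ) (hμ : 0 < μ)
    (x : ℕ → EuclideanSpace ℝ (Fin p)) (z u : ℕ → EuclideanSpace ℝ (Fin n))
    (hx : ∀ k, x (k+1)
      = mv (G + μ • (Aᵀ * A))⁻¹ (mv G xt + μ • mv Aᵀ (mv B (z k) + c - u k)))
    (hz : ∀ k, gg (z (k+1))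
      = μ • mv Bᵀ (mv A (x (k+1)) - mv B (z (k+1)) + u k - c))
    (hu : ∀ k, u (k+1) = u k + mv A (x (k+1)) - mv B (z (k+1)) - c)
    (zs : EuclideanSpace ℝ (Fin n))
    (hzconv : Tendsto z atTop (nhds zs)) :
    ∃ (us : EuclideanSpace ℝ (Fin n)) (xs : EuclideanSpace ℝ (Fin p)),
      us = μ⁻¹ • mv (B⁻¹)ᵀ (gg zs) ∧
      xs = mv (G + μ • (Aᵀ * A))⁻¹ (mv G xt + μ • mv Aᵀ (mv B zs + c - us)) ∧
      Tendsto u atTop (nhds us) ∧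
      Tendsto x atTop (nhds xs) ∧
      mv A xs - mv B zs = c ∧
      mv G (xs - xt) + μ • mv Aᵀ us = 0 ∧
      gg zs - μ • mv Bᵀ us = 0 := by
  have hμ0 : μ ≠ 0 := hμ.ne'
  set us := μ⁻¹ • mv (B⁻¹)ᵀ (gg zs) with hus
  set xs := mv (G + μ • (Aᵀ * A))⁻¹ (mv G xt + μ • mv Aᵀ (mv B zs + c - us)) with hxs
  have step1 : ∀ k, gg (z (k+1)) = μ • mv Bᵀ (u (k+1)) := by
    intro k
    rw [hz k]
    congr 1
    rw [hu k]
    abel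
  have hBB : (B⁻¹)ᵀ * Bᵀ = 1 := by
    rw [← Matrix.transpose_mul, Matrix.mul_nonsing_inv B hB, Matrix.transpose_one]
  have hBB' : Bᵀ * (B⁻¹)ᵀ = 1 := by
    rw [← Matrix.transpose_mul, Matrix.nonsing_inv_mul B hB, Matrix.transpose_one]
  have step2 : ∀ k, u (k+1) = μ⁻¹ • mv (B⁻¹)ᵀ (gg (z (k+1))) := by
    intro k
    rw [step1 k, mv_smul, mv_mv, hBB, mv_one, smul_smul, inv_mul_cancel₀ hμ0, one_smul]
  have hz1 : Tendsto (fun k => z (k+1)) atTop (nhds zs) :=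
    hzconv.comp (tendsto_add_atTop_nat 1)
  have huconv1 : Tendsto (fun k => u (k+1)) atTop (nhds us) := by
    have h : Tendsto (fun k => μ⁻¹ • mv (B⁻¹)ᵀ (gg (z (k+1)))) atTop (nhds us) := by
      rw [hus]
      exact ((((mv_cont (B⁻¹)ᵀ).comp hgc).tendsto zs).comp hz1).const_smul μ⁻¹
    exact h.congr (fun k => (step2 k).symm)
  have huconv : Tendsto u atTop (nhds us) := by
    rwa [← tendsto_add_atTop_iff_nat 1]
  have t1 : Tendsto (fun k => mv B (z k) + c - u k) atTop (nhds (mv B zs + c - us)) :=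
    ((((mv_cont B).tendsto zs).comp hzconv).add_const c).sub huconv
  have t3 : Tendsto (fun k => mv G xt + μ • mv Aᵀ (mv B (z k) + c - u k)) atTop
      (nhds (mv G xt + μ • mv Aᵀ (mv B zs + c - us))) :=
    ((((mv_cont Aᵀ).tendsto _).comp t1).const_smul μ).const_add _
  have hxconv1 : Tendsto (fun k => x (k+1)) atTop (nhds xs) := by
    have h := ((mv_cont (G + μ • (Aᵀ * A))⁻¹).tendsto _).comp t3
    rw [← hxs] at h
    exact h.congr (fun k => (hx k).symm)
  have hxconv : Tendsto x atTop (nhds xs) := by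
    rwa [← tendsto_add_atTop_iff_nat 1]
  -- feasibility
  have rhs : Tendsto (fun k => u k + mv A (x (k+1)) - mv B (z (k+1)) - c) atTop
      (nhds (us + mv A xs - mv B zs - c)) :=
    ((huconv.add (((mv_cont A).tendsto xs).comp hxconv1)).sub
      (((mv_cont B).tendsto zs).comp hz1)).sub_const c
  have huniq : us = us + mv A xs - mv B zs - c :=
    tendsto_nhds_unique (huconv1.congr fun k => hu k) rhs
  have hfeas : mv A xs - mv B zs = c := by
    have h2 : us + (mv A xs - mv B zs - c) = us + 0 := by
      rw [add_zero]
      conv_rhs => rw [huniq]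
      abel
    have h3 := add_left_cancel h2
    rwa [sub_eq_zero] at h3
  -- third stationarity
  have h3 : μ • mv Bᵀ us = gg zs := by
    rw [hus, mv_smul, mv_mv, hBB', mv_one, smul_smul, mul_inv_cancel₀ hμ0, one_smul]
  -- second stationarity
  have hAtA : (Aᵀ * A).PosSemidef := by
    simpa using Matrix.posSemidef_conjTranspose_mul_self A
  have hsemi : (μ • (Aᵀ * A)).PosSemidef := by
    constructor
    · simp [Matrix.IsHermitian, Matrix.conjTranspose_smul, hAtA.1.eq]
    · intro v
      exact (hAtA.smul hμ.le).2 v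
  have hS : (G + μ • (Aᵀ * A)).PosDef := hG.add_posSemidef hsemi
  have hSdet : IsUnit (G + μ • (Aᵀ * A)).det := hS.det_pos.ne'.isUnit
  have hSxs : mv (G + μ • (Aᵀ * A)) xs = mv G xt + μ • mv Aᵀ (mv B zs + c - us) := by
    rw [hxs, mv_mv, Matrix.mul_nonsing_inv _ hSdet, mv_one]
  have hc : mv B zs + c = mv A xs := by rw [← hfeas]; abel
  rw [mv_addM, mv_smulM, ← mv_mv, hc, mv_sub, smul_sub] at hSxs
  have hstat2 : mv G (xs - xt) + μ • mv Aᵀ us = 0 := by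
    rw [mv_sub]
    have e : mv G xs - mv G xt + μ • mv Aᵀ us =
        (mv G xs + μ • mv Aᵀ (mv A xs)) -
          (mv G xt + (μ • mv Aᵀ (mv A xs) - μ • mv Aᵀ us)) := by abel
    rw [e, hSxs, sub_self]
  exact ⟨us, xs, hus, hxs, huconv, hxconv, hfeas, hstat2, by rw [← h3, sub_self]⟩
end
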